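/- Let K be an augmented directed complex with basis B and let x ∈ K_i. The atom table ⟨x⟩ (defined by ⟨x⟩^ε_i = x and downward induction ⟨x⟩⁰_{k−1} = d(⟨x⟩⁰_k)₋, ⟨x⟩¹_{k−1} = d(⟨x⟩¹_k)₊) is an i-cell of ν(K) if and only if x ∈ K*_i and e(⟨x⟩⁰₀) = 1 = e(⟨x⟩¹₀). -/

import Mathlib

/-- `ADCCell M d e i x0 x1` says that the table with rows `x0` (sources) and
`x1` (targets), with entries `0` above degree `i`, is an `i`-cell of Steiner's
ω-category `ν(K)` of the augmented directed complex `(K, M, d, e)`. -/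
def ADCCell {K : ℕ → Type*} [∀ n, AddCommGroup (K n)]
    (M : ∀ n, AddSubmonoid (K n)) (d : ∀ n, K (n + 1) →+ K n) (e : K 0 →+ ℤ)
    (i : ℕ) (x0 x1 : ∀ k, K k) : Prop :=
  (∀ k, k ≤ i → x0 k ∈ M k ∧ x1 k ∈ M k) ∧
  (∀ k, k < i → d k (x0 (k + 1)) = x1 k - x0 k ∧ d k (x1 (k + 1)) = x1 k - x0 k) ∧
  e (x0 0) = 1 ∧ e (x1 0) = 1 ∧ x0 i = x1 i ∧ (∀ k, i < k → x0 k = 0 ∧ x1 k = 0)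

/-- The negative part `z₋` of an element of the free abelian group `α →₀ ℤ`. -/
noncomputable def fnegPart {α : Type*} (z : α →₀ ℤ) : α →₀ ℤ :=
  z.mapRange (fun t => max (-t) 0) (by simp)

/-- The positive part `z₊`. -/
noncomputable def fposPart {α : Type*} (z : α →₀ ℤ) : α →₀ ℤ :=
  z.mapRange (fun t => max t 0) (by simp)

/-- The lower source row `⟨x⟩⁰_k` of the atom table of `x ∈ K_i`:
`⟨x⟩⁰_i = x` and `⟨x⟩⁰_{k-1} = d(⟨x⟩⁰_k)₋` (value `0` for `k > i`). -/
noncomputable def atomNeg {B : ℕ → Type*}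
    (d : ∀ n, (B (n + 1) →₀ ℤ) →+ (B n →₀ ℤ)) :
    (i : ℕ) → (B i →₀ ℤ) → (k : ℕ) → (B k →₀ ℤ)
  | 0, x, k => if h : k = 0 then by subst h; exact x else 0
  | i + 1, x, k =>
      if h : k = i + 1 then by subst h; exact x
      else atomNeg d i (fnegPart (d i x)) k

/-- The upper target row `⟨x⟩¹_k` of the atom table of `x ∈ K_i`. -/
noncomputable def atomPos {B : ℕ → Type*}
    (d : ∀ n, (B (n + 1) →₀ ℤ) →+ (B n →₀ ℤ)) :
    (i : ℕ) → (B i →₀ ℤ) → (k : ℕ) → (B k →₀ ℤ)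
  | 0, x, k => if h : k = 0 then by subst h; exact x else 0
  | i + 1, x, k =>
      if h : k = i + 1 then by subst h; exact x
      else atomPos d i (fposPart (d i x)) k

/-- The positivity cone of the free abelian group `α →₀ ℤ`: the submonoid of
`ℕ`-linear combinations of basis elements. -/
noncomputable def posCone (α : Type*) : AddSubmonoid (α →₀ ℤ) where
  carrier := {z | ∀ a, 0 ≤ z a}
  zero_mem' := fun a => by simp
  add_mem' := by
    intro x y hx hy a
    simpa using add_nonneg (hx a) (hy a)


/-!
The rows of `⟨x⟩` are nonnegative because each is `x` or a positive or negative part, and they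
vanish above degree `i` by construction. The only real content is the boundary condition
`d ⟨x⟩^ε_{k+1} = ⟨x⟩¹_k - ⟨x⟩⁰_k`. Below the top degree the two rows are the atom tables of
`z₋` and `z₊` for `z = d y`, and since `d z = 0` these two have the same boundary. So one proves,
by induction on the degree, the boundary condition for the pair of tables `⟨y₀⟩⁰, ⟨y₁⟩¹` of any
two elements with `d y₀ = d y₁`, and applies it to `y₀ = y₁ = x`.
-/

section PosNegPart

variable {α : Type*}

theorem fposPart_sub_fnegPart (z : α →₀ ℤ) : fposPart z - fnegPart z = z := by
  ext a
  simp only [fposPart, fnegPart, Finsupp.sub_apply, Finsupp.mapRange_apply]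
  omega

theorem fposPart_mem_posCone (z : α →₀ ℤ) : fposPart z ∈ posCone α := fun a => by
  simp [fposPart]

theorem fnegPart_mem_posCone (z : α →₀ ℤ) : fnegPart z ∈ posCone α := fun a => by
  simp [fnegPart]

theorem map_fposPart_eq_map_fnegPart {β : Type*} (f : (α →₀ ℤ) →+ (β →₀ ℤ))
    {z : α →₀ ℤ} (hz : f z = 0) : f (fposPart z) = f (fnegPart z) := by
  rw [← sub_eq_zero, ← map_sub, fposPart_sub_fnegPart, hz]

end PosNegPart

section AtomTable

variable {B : ℕ → Type*} (d : ∀ n, (B (n + 1) →₀ ℤ) →+ (B n →₀ ℤ))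

@[simp]
theorem atomNeg_self (i : ℕ) (x : B i →₀ ℤ) : atomNeg d i x i = x := by
  cases i <;> simp [atomNeg]

@[simp]
theorem atomPos_self (i : ℕ) (x : B i →₀ ℤ) : atomPos d i x i = x := by
  cases i <;> simp [atomPos]

theorem atomNeg_succ {i k : ℕ} (x : B (i + 1) →₀ ℤ) (hk : k ≠ i + 1) :
    atomNeg d (i + 1) x k = atomNeg d i (fnegPart (d i x)) k := by
  simp [atomNeg, hk]

theorem atomPos_succ {i k : ℕ} (x : B (i + 1) →₀ ℤ) (hk : k ≠ i + 1) :
    atomPos d (i + 1) x k = atomPos d i (fposPart (d i x)) k := by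
  simp [atomPos, hk]

theorem atomNeg_of_lt {i k : ℕ} (x : B i →₀ ℤ) (hk : i < k) : atomNeg d i x k = 0 := by
  induction i with
  | zero => simp [atomNeg, hk.ne']
  | succ i ih => rw [atomNeg_succ d x hk.ne']; exact ih _ (by omega)

theorem atomPos_of_lt {i k : ℕ} (x : B i →₀ ℤ) (hk : i < k) : atomPos d i x k = 0 := by
  induction i with
  | zero => simp [atomPos, hk.ne']
  | succ i ih => rw [atomPos_succ d x hk.ne']; exact ih _ (by omega)

theorem atomNeg_mem_posCone {i k : ℕ} {x : B i →₀ ℤ} (hx : x ∈ posCone (B i)) (hk : k ≤ i) :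
    atomNeg d i x k ∈ posCone (B k) := by
  induction i with
  | zero => obtain rfl := Nat.le_zero.mp hk; simpa using hx
  | succ i ih =>
    rcases hk.eq_or_lt with rfl | hk
    · simpa using hx
    · rw [atomNeg_succ d x hk.ne]
      exact ih (fnegPart_mem_posCone _) (by omega)

theorem atomPos_mem_posCone {i k : ℕ} {x : B i →₀ ℤ} (hx : x ∈ posCone (B i)) (hk : k ≤ i) :
    atomPos d i x k ∈ posCone (B k) := by
  induction i with
  | zero => obtain rfl := Nat.le_zero.mp hk; simpa using hx
  | succ i ih =>
    rcases hk.eq_or_lt with rfl | hk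
    · simpa using hx
    · rw [atomPos_succ d x hk.ne]
      exact ih (fposPart_mem_posCone _) (by omega)

theorem map_atomNeg_atomPos_top {m : ℕ} {y₀ y₁ : B (m + 1) →₀ ℤ} (hy : d m y₀ = d m y₁) :
    d m (atomNeg d (m + 1) y₀ (m + 1)) = atomPos d (m + 1) y₁ m - atomNeg d (m + 1) y₀ m ∧
      d m (atomPos d (m + 1) y₁ (m + 1)) = atomPos d (m + 1) y₁ m - atomNeg d (m + 1) y₀ m := by
  rw [atomNeg_succ d y₀ (Nat.succ_ne_self m).symm, atomPos_succ d y₁ (Nat.succ_ne_self m).symm]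
  simp only [atomNeg_self, atomPos_self, ← hy, fposPart_sub_fnegPart, and_self]

theorem map_atomNeg_atomPos_of_map_eq (hdd : ∀ n x, d n (d (n + 1) x) = 0)
    {m : ℕ} {y₀ y₁ : B (m + 1) →₀ ℤ} (hy : d m y₀ = d m y₁) {k : ℕ} (hk : k ≤ m) :
    d k (atomNeg d (m + 1) y₀ (k + 1)) = atomPos d (m + 1) y₁ k - atomNeg d (m + 1) y₀ k ∧
      d k (atomPos d (m + 1) y₁ (k + 1)) = atomPos d (m + 1) y₁ k - atomNeg d (m + 1) y₀ k := by
  induction m with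
  | zero => obtain rfl := Nat.le_zero.mp hk; exact map_atomNeg_atomPos_top d hy
  | succ m ih =>
    rcases hk.eq_or_lt with rfl | hk
    · exact map_atomNeg_atomPos_top d hy
    rw [atomNeg_succ d y₀ (by omega : k + 1 ≠ m + 2), atomPos_succ d y₁ (by omega : k + 1 ≠ m + 2),
      atomNeg_succ d y₀ (by omega : k ≠ m + 2), atomPos_succ d y₁ (by omega : k ≠ m + 2)]
    refine ih ?_ (by omega)
    rw [hy, ← map_fposPart_eq_map_fnegPart (d m) (hdd m y₁)]

end AtomTable

theorem atom_isCell_iff_general {B : ℕ → Type*}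
    (d : ∀ n, (B (n + 1) →₀ ℤ) →+ (B n →₀ ℤ))
    (hdd : ∀ n x, d n (d (n + 1) x) = 0)
    (e : (B 0 →₀ ℤ) →+ ℤ)
    (i : ℕ) (x : B i →₀ ℤ) :
    ADCCell (K := fun n => B n →₀ ℤ) (fun n => posCone (B n)) d e i
        (fun k => atomNeg d i x k) (fun k => atomPos d i x k) ↔
      ((∀ b, 0 ≤ x b) ∧ e (atomNeg d i x 0) = 1 ∧ e (atomPos d i x 0) = 1) := by
  constructor
  · rintro ⟨hM, -, he₀, he₁, -⟩
    exact ⟨atomNeg_self d i x ▸ (hM i le_rfl).1, he₀, he₁⟩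
  · rintro ⟨hx, he₀, he₁⟩
    refine ⟨fun k hk => ⟨atomNeg_mem_posCone d hx hk, atomPos_mem_posCone d hx hk⟩,
      fun k hk => ?_, he₀, he₁, by simp, fun k hk => ⟨atomNeg_of_lt d x hk, atomPos_of_lt d x hk⟩⟩
    obtain ⟨m, rfl⟩ : ∃ m, i = m + 1 := Nat.exists_eq_succ_of_ne_zero (by omega)
    exact map_atomNeg_atomPos_of_map_eq d hdd rfl (by omega)

/-- For an augmented directed complex with basis `B` (so `K_i = B i →₀ ℤ`
with the standard positivity cone) and `x ∈ K_i`, the atom table `⟨x⟩` is an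
`i`-cell of `ν(K)` if and only if `x` lies in the positivity cone `K*_i` and
`e ⟨x⟩⁰₀ = 1 = e ⟨x⟩¹₀`. -/
theorem atom_isCell_iff {B : ℕ → Type*}
    (d : ∀ n, (B (n + 1) →₀ ℤ) →+ (B n →₀ ℤ))
    (hdd : ∀ n x, d n (d (n + 1) x) = 0)
    (e : (B 0 →₀ ℤ) →+ ℤ) (he : ∀ x, e (d 0 x) = 0)
    (i : ℕ) (x : B i →₀ ℤ) :
    ADCCell (K := fun n => B n →₀ ℤ) (fun n => posCone (B n)) d e i
        (fun k => atomNeg d i x k) (fun k => atomPos d i x k) ↔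
      ((∀ b, 0 ≤ x b) ∧ e (atomNeg d i x 0) = 1 ∧ e (atomPos d i x 0) = 1) :=
  atom_isCell_iff_general d hdd e i x
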